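/- arXiv:1602.04671 — 9 statements merged into one kernel-verified Lean document; each statement's English description precedes it below -/
import Mathlib

section
/- Let S be a finite type, π : S → ℝ with ∑_{β∈S} π(β) = 1, and θ, θ' ∈ ℝ. Let P and P' be the equal input matrices with parameters (π, θ) and (π, θ') respectively. Then the matrix product P * P' equals the equal input matrix with parameters (π, θ''), where θ'' = 1 − (1 − θ)(1 − θ'); in particular (P * P') α β = π(β)·(1 − (1 − θ)(1 − θ')) for all α ≠ β, and consequently P * P' = P' * P (EI matrices with a common π commute). -/
/-!
Write `M` for the matrix all of whose rows equal `π`. Then `EIMatrix π θ = θ • M + (1 - θ) • 1`,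
and `∑ π = 1` makes `M` idempotent. Inside the commutative algebra spanned by `1` and an
idempotent, the elements `a • e + (1 - a) • 1` multiply by multiplying their coefficients
`1 - a` of `1`, which is symmetric in the two factors.
-/

noncomputable def EIMatrix {S : Type*} [Fintype S] [DecidableEq S]
    (π : S → ℝ) (θ : ℝ) : Matrix S S ℝ :=
  fun α β => if α = β then 1 - θ + π α * θ else π β * θ

theorem IsIdempotentElem.smul_add_one_sub_smul_mul {R A : Type*} [CommRing R] [Ring A]
    [Algebra R A] {e : A} (he : IsIdempotentElem e) (a b : R) :
    (a • e + (1 - a) • 1) * (b • e + (1 - b) • 1) =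
      (1 - (1 - a) * (1 - b)) • e + ((1 - a) * (1 - b)) • (1 : A) := by
  simp only [mul_add, add_mul, smul_mul_smul_comm, he.eq, mul_one, one_mul]
  module

theorem Matrix.isIdempotentElem_of_const_rows {S R : Type*} [Fintype S] [Semiring R]
    {π : S → R} (hπ : ∑ β, π β = 1) :
    IsIdempotentElem (Matrix.of fun _ β => π β : Matrix S S R) := by
  ext α β
  simp [Matrix.mul_apply, ← Finset.sum_mul, hπ]

section EIMatrix

variable {S : Type*} [Fintype S] [DecidableEq S]

theorem EIMatrix_eq_smul_add_smul_one (π : S → ℝ) (θ : ℝ) :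
    EIMatrix π θ = θ • Matrix.of (fun _ β => π β) + (1 - θ) • (1 : Matrix S S ℝ) := by
  ext α β
  by_cases h : α = β
  · subst h
    simp only [EIMatrix, ↓reduceIte, Matrix.smul_of, Matrix.add_apply, Matrix.of_apply,
      Pi.smul_apply, smul_eq_mul, Matrix.smul_apply, Matrix.one_apply_eq, mul_one]
    ring
  · simp [EIMatrix, h, Matrix.one_apply_ne h, mul_comm]

theorem EIMatrix_mul_EIMatrix {π : S → ℝ} (hπ : ∑ β, π β = 1) (θ θ' : ℝ) :
    EIMatrix π θ * EIMatrix π θ' = EIMatrix π (1 - (1 - θ) * (1 - θ')) := by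
  rw [EIMatrix_eq_smul_add_smul_one, EIMatrix_eq_smul_add_smul_one,
    EIMatrix_eq_smul_add_smul_one, sub_sub_cancel]
  exact (Matrix.isIdempotentElem_of_const_rows hπ).smul_add_one_sub_smul_mul θ θ'

end EIMatrix

/-- equal input matrices with a common stationary distribution are
multiplicatively closed (with `θ'' = 1 - (1-θ)(1-θ')`) and commute. -/
theorem ei_mul {S : Type*} [Fintype S] [DecidableEq S]
    (π : S → ℝ) (hπ : ∑ β, π β = 1) (θ θ' : ℝ) :
    EIMatrix π θ * EIMatrix π θ' = EIMatrix π (1 - (1 - θ) * (1 - θ')) ∧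
      (∀ α β, α ≠ β →
        (EIMatrix π θ * EIMatrix π θ') α β = π β * (1 - (1 - θ) * (1 - θ'))) ∧
      EIMatrix π θ * EIMatrix π θ' = EIMatrix π θ' * EIMatrix π θ := by
  have hmul := EIMatrix_mul_EIMatrix hπ θ θ'
  refine ⟨hmul, fun α β hαβ => ?_, ?_⟩
  · rw [hmul]
    simp [EIMatrix, hαβ]
  · rw [hmul, EIMatrix_mul_EIMatrix hπ θ' θ, mul_comm (1 - θ)]
end

section
/- Let S be a finite type and π : S → ℝ with ∑_{β∈S} π(β) = 1. Let Q : Matrix S S ℝ be the equal input rate matrix, defined by Q α β = π(β) for α ≠ β and Q α α = π(α) − 1. Then for every t ∈ ℝ, the matrix exponential satisfies Matrix.exp ℝ (t • Q) = the equal input transition matrix with parameters (π, 1 − e^{−t}); explicitly, (Matrix.exp ℝ (t • Q)) α β = π(β)·(1 − e^{−t}) for α ≠ β, and (Matrix.exp ℝ (t • Q)) α α = e^{−t} + π(α)·(1 − e^{−t}). -/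
/-!
Writing `J` for the matrix all of whose rows equal `π`, we have `Q = J - 1`, and `∑ π = 1` makes
`J` idempotent, hence so is `-Q = 1 - J`. For an idempotent `P` every power `(t • P) ^ n` with
`n ≥ 1` equals `t ^ n • P`, so the exponential series collapses to `exp (t • P) = 1 - P + eᵗ • P`.
Taking `P = -Q` and `-t` in place of `t` gives `exp (t • Q) = 1 + (1 - e⁻ᵗ) • Q`.
-/

open NormedSpace

/-- The equal input rate matrix `Q` with `Q α β = π β` off the diagonal and
`Q α α = π α - 1` on the diagonal. -/
noncomputable def EIRateMatrix {S : Type*} [Fintype S] [DecidableEq S]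
    (π : S → ℝ) : Matrix S S ℝ :=
  fun α β => if α = β then π α - 1 else π β

theorem IsIdempotentElem.exp_smul {𝕂 𝔸 : Type*} [NontriviallyNormedField 𝕂] [CharZero 𝕂]
    [ContinuousSMul ℚ 𝕂] [CompleteSpace 𝕂] [NormedRing 𝔸] [NormedAlgebra 𝕂 𝔸] [CompleteSpace 𝔸]
    {P : 𝔸} (hP : IsIdempotentElem P) (t : 𝕂) :
    exp (t • P) = 1 - P + exp t • P := by
  have hpow (n : ℕ) : (t • P) ^ n = (0 : 𝕂) ^ n • (1 - P) + t ^ n • P := by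
    cases n with
    | zero => simp
    | succ n => simp [smul_pow, hP.pow_succ_eq]
  -- the `0 ^ n` part of the series sums to `exp 0 = 1`
  have hsum := ((exp_series_hasSum_exp' (𝕂 := 𝕂) (0 : 𝕂)).smul_const (1 - P)).add
    ((exp_series_hasSum_exp' (𝕂 := 𝕂) t).smul_const P)
  rw [exp_zero, one_smul] at hsum
  refine (exp_series_hasSum_exp' (𝕂 := 𝕂) (t • P)).unique ?_
  simpa only [hpow, smul_add, smul_smul, smul_eq_mul] using hsum

theorem Matrix.isIdempotentElem_vecMulVec {n α : Type*} [Fintype n] [Semiring α]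
    {u v : n → α} (h : v ⬝ᵥ u = 1) : IsIdempotentElem (vecMulVec u v) := by
  rw [IsIdempotentElem, vecMulVec_mul_vecMulVec, h, one_smul]

theorem EIRateMatrix_eq_vecMulVec_sub_one {S : Type*} [Fintype S] [DecidableEq S] (π : S → ℝ) :
    EIRateMatrix π = Matrix.vecMulVec 1 π - 1 := by
  ext α β
  by_cases h : α = β <;> simp [EIRateMatrix, h]

/-- the matrix exponential of `t • Q` is the equal input transition
matrix with parameters `(π, 1 - e^{-t})`. -/
theorem ei_exp_rate_matrix {S : Type*} [Fintype S] [DecidableEq S]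
    (π : S → ℝ) (hπ : ∑ β, π β = 1) (t : ℝ) :
    (∀ α β, α ≠ β →
      exp (t • EIRateMatrix π) α β = π β * (1 - Real.exp (-t))) ∧
    (∀ α, exp (t • EIRateMatrix π) α α =
      Real.exp (-t) + π α * (1 - Real.exp (-t))) := by
  have hP : IsIdempotentElem (-EIRateMatrix π) := by
    rw [EIRateMatrix_eq_vecMulVec_sub_one, neg_sub]
    exact (Matrix.isIdempotentElem_vecMulVec (by simpa [dotProduct] using hπ)).one_sub
  have hexp :
      exp (t • EIRateMatrix π) = 1 + EIRateMatrix π - Real.exp (-t) • EIRateMatrix π := by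
    rw [← neg_smul_neg]
    open scoped Matrix.Norms.Operator in refine (hP.exp_smul (-t)).trans ?_
    rw [Real.exp_eq_exp_ℝ, sub_neg_eq_add, smul_neg, ← sub_eq_add_neg]
  refine ⟨fun α β hαβ => ?_, fun α => ?_⟩
  · simp only [hexp, Matrix.sub_apply, Matrix.add_apply, Matrix.smul_apply, smul_eq_mul,
      Matrix.one_apply_ne hαβ, EIRateMatrix, if_neg hαβ]
    ring
  · simp only [hexp, Matrix.sub_apply, Matrix.add_apply, Matrix.smul_apply, smul_eq_mul,
      Matrix.one_apply_eq, EIRateMatrix, ↓reduceIte]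
    ring
end

section
/- Let S and S' be finite types, let f : S → S' be any (lumping) map, let π : S → ℝ with ∑_{β∈S} π(β) = 1, let θ ∈ ℝ, and let P be the equal input matrix with parameters (π, θ). Define π̃ : S' → ℝ by π̃(b) = ∑_{β : f β = b} π(β). Then for every α ∈ S and b ∈ S': if f(α) ≠ b then ∑_{β : f β = b} P α β = π̃(b)·θ, and if f(α) = b then ∑_{β : f β = b} P α β = 1 − θ + π̃(b)·θ. In particular ∑_{β : f β = b} P α β depends on α only through f(α) (the lumpability criterion), and the lumped matrix P̃ : Matrix S' S' ℝ defined by P̃ (f α) b = ∑_{β : f β = b} P α β is the equal input matrix with parameters (π̃, θ). -/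
section EIMatrix

open Finset

variable {S : Type*} [Fintype S] [DecidableEq S] (π : S → ℝ) (θ : ℝ)

theorem EIMatrix_apply (α β : S) :
    EIMatrix π θ α β = (if α = β then 1 - θ else 0) + π β * θ := by
  unfold EIMatrix
  split_ifs with h
  · rw [h]
  · rw [zero_add]

theorem sum_EIMatrix_row (α : S) (s : Finset S) :
    ∑ β ∈ s, EIMatrix π θ α β = (if α ∈ s then 1 - θ else 0) + (∑ β ∈ s, π β) * θ := by
  simp only [EIMatrix_apply, sum_add_distrib, sum_ite_eq, sum_mul]

theorem sum_EIMatrix_fiber {S' : Type*} [Fintype S'] [DecidableEq S'] (f : S → S')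
    (α : S) (b : S') :
    ∑ β ∈ univ.filter (fun β => f β = b), EIMatrix π θ α β =
      EIMatrix (fun b => ∑ β ∈ univ.filter (fun β => f β = b), π β) θ (f α) b := by
  rw [sum_EIMatrix_row, EIMatrix_apply]
  simp only [mem_filter, mem_univ, true_and]

end EIMatrix

theorem ei_lumpable_general {S S' : Type*} [Fintype S] [DecidableEq S]
    [Fintype S'] [DecidableEq S'] (f : S → S')
    (π : S → ℝ) (θ : ℝ) :
    ∀ α b,
      ((f α ≠ b → ∑ β ∈ Finset.univ.filter (fun β => f β = b), EIMatrix π θ α β =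
          (∑ β ∈ Finset.univ.filter (fun β => f β = b), π β) * θ) ∧
       (f α = b → ∑ β ∈ Finset.univ.filter (fun β => f β = b), EIMatrix π θ α β =
          1 - θ + (∑ β ∈ Finset.univ.filter (fun β => f β = b), π β) * θ)) ∧
      ∑ β ∈ Finset.univ.filter (fun β => f β = b), EIMatrix π θ α β =
        EIMatrix (fun b => ∑ β ∈ Finset.univ.filter (fun β => f β = b), π β) θ (f α) b := by
  intro α b
  have lumped := sum_EIMatrix_fiber π θ f α b
  refine ⟨⟨fun h => ?_, fun h => ?_⟩, lumped⟩
  · rw [lumped, EIMatrix_apply, if_neg h, zero_add]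
  · rw [lumped, EIMatrix_apply, if_pos h]

/-- lumping an equal input chain along any map `f : S → S'` again
gives an equal input chain, with lumped distribution `π̃ b = ∑_{f β = b} π β`. -/
theorem ei_lumpable {S S' : Type*} [Fintype S] [DecidableEq S]
    [Fintype S'] [DecidableEq S'] (f : S → S')
    (π : S → ℝ) (hπ : ∑ β, π β = 1) (θ : ℝ) :
    ∀ α b,
      ((f α ≠ b → ∑ β ∈ Finset.univ.filter (fun β => f β = b), EIMatrix π θ α β =
          (∑ β ∈ Finset.univ.filter (fun β => f β = b), π β) * θ) ∧
       (f α = b → ∑ β ∈ Finset.univ.filter (fun β => f β = b), EIMatrix π θ α β =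
          1 - θ + (∑ β ∈ Finset.univ.filter (fun β => f β = b), π β) * θ)) ∧
      ∑ β ∈ Finset.univ.filter (fun β => f β = b), EIMatrix π θ α β =
        EIMatrix (fun b => ∑ β ∈ Finset.univ.filter (fun β => f β = b), π β) θ (f α) b :=
  ei_lumpable_general f π θ
end

section
/- (Lake-type invariants.) Let S be a finite type and let a₁, a₂, b₁, b₂ ∈ S be pairwise distinct. Let π : S → ℝ satisfy π(a₁) ≠ 0, π(a₂) ≠ 0, π(b₁) ≠ 0, π(b₂) ≠ 0, let w, p₁, p₂, q₁, q₂ : S → ℝ be arbitrary functions, and let c, d ∈ ℝ. Suppose the partial separability condition holds: for i = 1, 2 and every s ∈ S with s ≠ a₁ and s ≠ a₂, pᵢ(s) = π(aᵢ)·c; and for j = 1, 2 and every s ∈ S with s ≠ b₁ and s ≠ b₂, qⱼ(s) = π(bⱼ)·d. Define P_{ij} = ∑_{s∈S} w(s)·pᵢ(s)·qⱼ(s) and the normalized quantities P̃_{ij} = P_{ij} / (π(aᵢ)·π(bⱼ)). Then P̃₁₁ + P̃₂₂ − P̃₁₂ − P̃₂₁ = 0. -/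
/-!
Dividing by `π aᵢ * π bⱼ` turns `P̃ᵢⱼ` into `∑ s, w s * p̃ᵢ s * q̃ⱼ s` with `p̃ᵢ = pᵢ / π aᵢ` and
`q̃ⱼ = qⱼ / π bⱼ`, so the alternating combination factors as
`∑ s, w s * (p̃₁ s - p̃₂ s) * (q̃₁ s - q̃₂ s)`. Partial separability makes every summand vanish:
off `{a₁, a₂}` both `p̃ᵢ s` equal `c`, and on `{a₁, a₂}`, which misses `{b₁, b₂}`, both `q̃ⱼ s`
equal `d`.
-/

open Finset

section

variable {S : Type*} [Fintype S]

lemma sum_div_combination_eq_sum_mul_sub_mul_sub {K : Type*} [Field K] (w p₁ p₂ q₁ q₂ : S → K)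
    (x₁ x₂ y₁ y₂ : K) :
    (∑ s, w s * p₁ s * q₁ s) / (x₁ * y₁) + (∑ s, w s * p₂ s * q₂ s) / (x₂ * y₂) -
        (∑ s, w s * p₁ s * q₂ s) / (x₁ * y₂) - (∑ s, w s * p₂ s * q₁ s) / (x₂ * y₁) =
      ∑ s, w s * (p₁ s / x₁ - p₂ s / x₂) * (q₁ s / y₁ - q₂ s / y₂) := by
  simp only [sum_div, ← sum_add_distrib, ← sum_sub_distrib]
  exact sum_congr rfl fun s _ => by ring

lemma sum_mul_sub_mul_sub_eq_zero {R : Type*} [NonUnitalNonAssocRing R]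
    (w f₁ f₂ g₁ g₂ : S → R) (h : ∀ s, f₁ s = f₂ s ∨ g₁ s = g₂ s) :
    ∑ s, w s * (f₁ s - f₂ s) * (g₁ s - g₂ s) = 0 :=
  sum_eq_zero fun s _ => by rcases h s with h | h <;> simp [h]

end

/-- Lake-type invariants: under the partial separability condition,
the normalized quantities satisfy `P̃₁₁ + P̃₂₂ - P̃₁₂ - P̃₂₁ = 0`. -/
theorem lake_type_invariant {S : Type*} [Fintype S]
    (a₁ a₂ b₁ b₂ : S)
    (hab : a₁ ≠ a₂ ∧ a₁ ≠ b₁ ∧ a₁ ≠ b₂ ∧ a₂ ≠ b₁ ∧ a₂ ≠ b₂ ∧ b₁ ≠ b₂)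
    (π : S → ℝ)
    (ha₁ : π a₁ ≠ 0) (ha₂ : π a₂ ≠ 0) (hb₁ : π b₁ ≠ 0) (hb₂ : π b₂ ≠ 0)
    (w p₁ p₂ q₁ q₂ : S → ℝ) (c d : ℝ)
    (hp₁ : ∀ s, s ≠ a₁ → s ≠ a₂ → p₁ s = π a₁ * c)
    (hp₂ : ∀ s, s ≠ a₁ → s ≠ a₂ → p₂ s = π a₂ * c)
    (hq₁ : ∀ s, s ≠ b₁ → s ≠ b₂ → q₁ s = π b₁ * d)
    (hq₂ : ∀ s, s ≠ b₁ → s ≠ b₂ → q₂ s = π b₂ * d) :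
    (∑ s, w s * p₁ s * q₁ s) / (π a₁ * π b₁) +
      (∑ s, w s * p₂ s * q₂ s) / (π a₂ * π b₂) -
      (∑ s, w s * p₁ s * q₂ s) / (π a₁ * π b₂) -
      (∑ s, w s * p₂ s * q₁ s) / (π a₂ * π b₁) = 0 := by
  obtain ⟨-, ha₁b₁, ha₁b₂, ha₂b₁, ha₂b₂, -⟩ := hab
  rw [sum_div_combination_eq_sum_mul_sub_mul_sub]
  refine sum_mul_sub_mul_sub_eq_zero _ _ _ _ _ fun s => ?_
  by_cases hs : s ≠ a₁ ∧ s ≠ a₂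
  · left
    rw [hp₁ s hs.1 hs.2, hp₂ s hs.1 hs.2, mul_div_cancel_left₀ c ha₁, mul_div_cancel_left₀ c ha₂]
  · right
    have hs : s = a₁ ∨ s = a₂ := by tauto
    have hsb₁ : s ≠ b₁ := by rcases hs with rfl | rfl <;> assumption
    have hsb₂ : s ≠ b₂ := by rcases hs with rfl | rfl <;> assumption
    rw [hq₁ s hsb₁ hsb₂, hq₂ s hsb₁ hsb₂, mul_div_cancel_left₀ d hb₁, mul_div_cancel_left₀ d hb₂]
end

section
/- Let n ≥ 1, let S be a finite type with |S| = κ, and let π : S → ℝ satisfy π(s) > 0 for all s and ∑_{s∈S} π(s) = 1. For each set partition σ of Fin n (a Finpartition of Finset.univ in Fin n), let q_σ : (Fin n → S) → ℝ be the point defined by: q_σ(χ) = ∏_{B ∈ σ.parts} π(s_B) if χ is constant on every block B of σ (where s_B denotes the common value of χ on B), and q_σ(χ) = 0 otherwise. Then the family of points (q_σ), indexed by the set partitions σ of Fin n having at most κ blocks, is affinely independent in the real vector space (Fin n → S) → ℝ (i.e., AffineIndependent ℝ for this indexed family). -/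
/-- The point `q_σ` of the equal input / random cluster model associated with a
set partition `σ` of `Fin n`: its coordinate at a character `χ : Fin n → S` is
`∏_{B ∈ σ} π(s_B)` if `χ` is constant with value `s_B` on each block `B` of `σ`,
and `0` otherwise. -/
noncomputable def qpt {n : ℕ} {S : Type*} [Fintype S] [DecidableEq S] (π : S → ℝ)
    (σ : Finpartition (Finset.univ : Finset (Fin n))) (χ : Fin n → S) : ℝ :=
  if ∀ B ∈ σ.parts, ∀ i ∈ B, ∀ j ∈ B, χ i = χ j then
    ∏ B ∈ σ.parts.attach,
      π (χ ((B : Finset (Fin n)).min' (σ.nonempty_of_mem_parts B.2)))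
  else 0

/-!
Colour the blocks of `σ` injectively by states (possible since `σ` has at most `κ` blocks) and
let `χ_σ` be the resulting character. Then `q_σ(χ_σ) > 0`, while `q_τ(χ_σ) ≠ 0` forces every
block of `τ` into a single block of `σ`, i.e. `τ` refines `σ`. The matrix `(q_τ(χ_σ))` is thus
triangular for the refinement order with nonzero diagonal, so the points are even linearly
independent.
-/

theorem linearIndependent_of_triangular {ι X R : Type*} [Ring R] [NoZeroDivisors R]
    [PartialOrder ι] [WellFoundedLT ι] (v : ι → X → R) (x : ι → X)
    (hdiag : ∀ i, v i (x i) ≠ 0) (htri : ∀ i j, v j (x i) ≠ 0 → j ≤ i) :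
    LinearIndependent R v := by
  rw [linearIndependent_iff']
  intro s g hg i
  induction i using WellFoundedLT.induction with
  | _ i IH =>
  intro hi
  have hsum : ∑ j ∈ s, g j * v j (x i) = 0 := by
    simpa [Finset.sum_apply] using congrFun hg (x i)
  rw [Finset.sum_eq_single_of_mem i hi] at hsum
  · exact (mul_eq_zero.mp hsum).resolve_right (hdiag i)
  · intro j hj hji
    by_cases h : v j (x i) = 0
    · rw [h, mul_zero]
    · rw [IH j (lt_of_le_of_ne (htri i j h) hji) hj, zero_mul]

namespace Finpartition

variable {α : Type*} [DecidableEq α] {s : Finset α}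

theorem le_of_forall_part_eq {σ τ : Finpartition s}
    (h : ∀ B ∈ τ.parts, ∀ i ∈ B, ∀ j ∈ B, σ.part i = σ.part j) : τ ≤ σ := by
  intro B hB
  obtain ⟨x, hx⟩ := τ.nonempty_of_mem_parts hB
  refine ⟨σ.part x, σ.part_mem.mpr (τ.le hB hx), fun y hy => ?_⟩
  rw [← h B hB y hy x hx]
  exact σ.mem_part (τ.le hB hy)

end Finpartition

section EqualInput

variable {n : ℕ} {S : Type*}

theorem qpt_pos [Fintype S] [DecidableEq S] {π : S → ℝ} (hpos : ∀ s, 0 < π s)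
    {σ : Finpartition (Finset.univ : Finset (Fin n))} {χ : Fin n → S}
    (hχ : ∀ B ∈ σ.parts, ∀ i ∈ B, ∀ j ∈ B, χ i = χ j) : 0 < qpt π σ χ := by
  rw [qpt, if_pos hχ]
  exact Finset.prod_pos fun B _ => hpos _

theorem forall_eq_of_qpt_ne_zero [Fintype S] [DecidableEq S] {π : S → ℝ}
    {σ : Finpartition (Finset.univ : Finset (Fin n))} {χ : Fin n → S}
    (h : qpt π σ χ ≠ 0) : ∀ B ∈ σ.parts, ∀ i ∈ B, ∀ j ∈ B, χ i = χ j := by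
  by_contra hχ
  exact h (if_neg hχ)

def blockColouring (σ : Finpartition (Finset.univ : Finset (Fin n))) (f : σ.parts → S) :
    Fin n → S :=
  fun i => f ⟨σ.part i, σ.part_mem.mpr (Finset.mem_univ i)⟩

theorem blockColouring_eq_of_mem (σ : Finpartition (Finset.univ : Finset (Fin n)))
    (f : σ.parts → S) : ∀ B ∈ σ.parts, ∀ i ∈ B, ∀ j ∈ B,
      blockColouring σ f i = blockColouring σ f j := by
  intro B hB i hi j hj
  simp only [blockColouring, σ.part_eq_of_mem hB hi, σ.part_eq_of_mem hB hj]

theorem le_of_qpt_blockColouring_ne_zero [Fintype S] [DecidableEq S] {π : S → ℝ}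
    {σ τ : Finpartition (Finset.univ : Finset (Fin n))} {f : σ.parts → S}
    (hf : Function.Injective f) (h : qpt π τ (blockColouring σ f) ≠ 0) : τ ≤ σ :=
  Finpartition.le_of_forall_part_eq fun B hB i hi j hj =>
    congrArg Subtype.val (hf (forall_eq_of_qpt_ne_zero h B hB i hi j hj))

end EqualInput

theorem qpt_affineIndependent_general (n : ℕ) {S : Type*} [Fintype S]
    [DecidableEq S] (κ : ℕ) (hκ : Fintype.card S = κ)
    (π : S → ℝ) (hpos : ∀ s, 0 < π s) :
    AffineIndependent ℝ
      (fun σ : {σ : Finpartition (Finset.univ : Finset (Fin n)) //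
          σ.parts.card ≤ κ} => qpt π σ.1) := by
  subst hκ
  have colouring (σ : {σ : Finpartition (Finset.univ : Finset (Fin n)) //
      σ.parts.card ≤ Fintype.card S}) : σ.1.parts ↪ S :=
    (Function.Embedding.nonempty_of_card_le (by simpa using σ.2)).some
  refine LinearIndependent.affineIndependent ℝ <| linearIndependent_of_triangular _
    (fun σ => blockColouring σ.1 (colouring σ)) (fun σ => ?_) (fun σ τ h => ?_)
  · exact (qpt_pos hpos (blockColouring_eq_of_mem _ _)).ne'
  · exact le_of_qpt_blockColouring_ne_zero (colouring σ).injective h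

/-- for a strictly positive distribution `π` on `κ` states, the
points `q_σ`, indexed by the set partitions `σ` of `Fin n` with at most `κ`
blocks, are affinely independent. -/
theorem qpt_affineIndependent (n : ℕ) (hn : 1 ≤ n) {S : Type*} [Fintype S]
    [DecidableEq S] (κ : ℕ) (hκ : Fintype.card S = κ)
    (π : S → ℝ) (hpos : ∀ s, 0 < π s) (hsum : ∑ s, π s = 1) :
    AffineIndependent ℝ
      (fun σ : {σ : Finpartition (Finset.univ : Finset (Fin n)) //
          σ.parts.card ≤ κ} => qpt π σ.1) :=
  qpt_affineIndependent_general n κ hκ π hpos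
end

section
/- Let n ≥ 1, let S be a finite type with |S| = κ ≥ 1, and let π : S → ℝ be the uniform distribution, π(s) = 1/κ for all s. For each set partition σ of Fin n, let q_σ : (Fin n → S) → ℝ be defined by q_σ(χ) = ∏_{B ∈ σ.parts} π(s_B) if χ is constant on every block B of σ (with common value s_B), and 0 otherwise. Then the ℝ-linear span of { q_σ : σ a set partition of Fin n with at most κ blocks } equals the subspace { v : (Fin n → S) → ℝ | v(χ) = v(χ') whenever χ and χ' have the same kernel partition, i.e. whenever (χ i = χ j ↔ χ' i = χ' j) for all i, j }. In particular this span has dimension equal to the number of set partitions of Fin n with at most κ blocks. -/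
open Finset

theorem Finpartition.le_of_forall_part_eq_s12 {α : Type*} [DecidableEq α] {s : Finset α}
    {P Q : Finpartition s} (h : ∀ a, P.part a = Q.part a) : P ≤ Q := by
  intro t ht
  obtain ⟨a, ha⟩ := P.nonempty_of_mem_parts ht
  refine ⟨Q.part a, Q.part_mem.2 (P.le ht ha), ?_⟩
  rw [← h, P.part_eq_of_mem ht ha]

theorem Finpartition.eq_of_forall_part_eq {α : Type*} [DecidableEq α] {s : Finset α}
    {P Q : Finpartition s} (h : ∀ a, P.part a = Q.part a) : P = Q :=
  le_antisymm (le_of_forall_part_eq_s12 h) (le_of_forall_part_eq_s12 fun a => (h a).symm)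

section KerPartition

variable {α S : Type*} [Fintype α] [DecidableEq α] [DecidableEq S]

def kerPartition (χ : α → S) : Finpartition (univ : Finset α) :=
  @Finpartition.ofSetoid α _ _ (Setoid.ker χ) fun a b => decEq (χ a) (χ b)

theorem mem_part_kerPartition {χ : α → S} {a b : α} :
    b ∈ (kerPartition χ).part a ↔ χ a = χ b :=
  Finpartition.mem_part_ofSetoid_iff_rel

theorem kerPartition_eq_iff {χ : α → S} {σ : Finpartition (univ : Finset α)} :
    kerPartition χ = σ ↔ ∀ a b, χ a = χ b ↔ b ∈ σ.part a := by
  constructor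
  · rintro rfl a b
    exact mem_part_kerPartition.symm
  · intro h
    refine Finpartition.eq_of_forall_part_eq fun a => ?_
    ext b
    rw [mem_part_kerPartition, h]

theorem kerPartition_eq_kerPartition_iff {χ χ' : α → S} :
    kerPartition χ = kerPartition χ' ↔ ∀ i j, χ i = χ j ↔ χ' i = χ' j := by
  simp only [kerPartition_eq_iff, mem_part_kerPartition]

theorem le_kerPartition_iff {σ : Finpartition (univ : Finset α)} {χ : α → S} :
    σ ≤ kerPartition χ ↔ ∀ B ∈ σ.parts, ∀ i ∈ B, ∀ j ∈ B, χ i = χ j := by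
  constructor
  · intro h B hB i hi j hj
    obtain ⟨C, hC, hBC⟩ := h hB
    rw [← (kerPartition χ).part_eq_of_mem hC (hBC hi)] at hBC
    exact mem_part_kerPartition.1 (hBC hj)
  · intro h B hB
    obtain ⟨i, hi⟩ := σ.nonempty_of_mem_parts hB
    exact ⟨(kerPartition χ).part i, (kerPartition χ).part_mem.2 (mem_univ i),
      fun j hj => mem_part_kerPartition.2 (h B hB i hi j hj)⟩

variable [Fintype S]

theorem card_parts_kerPartition_le (χ : α → S) :
    #(kerPartition χ).parts ≤ Fintype.card S := by
  refine card_le_card_of_surjOn (fun s => ({b | s = χ b} : Finset α)) fun t ht => ?_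
  obtain ⟨a, ha⟩ := (kerPartition χ).nonempty_of_mem_parts ht
  refine ⟨χ a, mem_coe.2 (mem_univ _), ?_⟩
  rw [← (kerPartition χ).part_eq_of_mem ht ha]
  ext b
  simp [mem_part_kerPartition]

theorem exists_kerPartition_eq {σ : Finpartition (univ : Finset α)}
    (h : #σ.parts ≤ Fintype.card S) : ∃ χ : α → S, kerPartition χ = σ := by
  obtain ⟨f⟩ := Function.Embedding.nonempty_of_card_le (α := σ.parts) (β := S)
    (by rwa [Fintype.card_coe])
  refine ⟨fun i => f ⟨σ.part i, σ.part_mem.2 (mem_univ i)⟩,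
    kerPartition_eq_iff.2 fun a b => ?_⟩
  rw [f.injective.eq_iff, Subtype.mk.injEq, eq_comm,
    σ.mem_part_iff_part_eq_part (mem_univ b) (mem_univ a)]

end KerPartition

section KerIndicator

variable {α S : Type*} [Fintype α] [DecidableEq α] [DecidableEq S]

def kerIndicator (τ : Finpartition (univ : Finset α)) : (α → S) → ℝ :=
  fun χ => if kerPartition χ = τ then 1 else 0

theorem sum_kerIndicator_filter (p : Finpartition (univ : Finset α) → Prop) [DecidablePred p] :
    ∑ τ with p τ, (kerIndicator τ : (α → S) → ℝ) =
      fun χ => if p (kerPartition χ) then 1 else 0 := by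
  funext χ
  simp [kerIndicator, Finset.sum_apply, sum_ite_eq]

open Classical in
theorem kerIndicator_eq_sub (σ : Finpartition (univ : Finset α)) :
    (kerIndicator σ : (α → S) → ℝ) =
      ∑ τ with σ ≤ τ, kerIndicator τ - ∑ τ with σ < τ, kerIndicator τ := by
  funext χ
  simp only [sum_kerIndicator_filter, Pi.sub_apply, kerIndicator, lt_iff_le_and_ne]
  by_cases h : σ = kerPartition χ <;> simp [h, eq_comm]

def kerInvariant : Submodule ℝ ((α → S) → ℝ) where
  carrier := {v | ∀ χ χ', kerPartition χ = kerPartition χ' → v χ = v χ'}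
  add_mem' hv hw χ χ' h := by simp only [Pi.add_apply, hv χ χ' h, hw χ χ' h]
  zero_mem' _ _ _ := rfl
  smul_mem' c v hv χ χ' h := by simp only [Pi.smul_apply, hv χ χ' h]

variable [Fintype S]

theorem kerIndicator_eq_zero {τ : Finpartition (univ : Finset α)}
    (h : Fintype.card S < #τ.parts) : (kerIndicator τ : (α → S) → ℝ) = 0 :=
  funext fun χ => if_neg fun hχ => (hχ ▸ card_parts_kerPartition_le χ).not_gt h

variable (α S) in
abbrev RealizablePartition : Type _ :=
  {τ : Finpartition (univ : Finset α) // #τ.parts ≤ Fintype.card S}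

noncomputable def realization (τ : RealizablePartition α S) : α → S :=
  (exists_kerPartition_eq τ.2).choose

theorem kerPartition_realization (τ : RealizablePartition α S) :
    kerPartition (realization τ) = τ :=
  (exists_kerPartition_eq τ.2).choose_spec

theorem linearIndependent_kerIndicator :
    LinearIndependent ℝ fun τ : RealizablePartition α S => (kerIndicator τ.1 : (α → S) → ℝ) := by
  refine Fintype.linearIndependent_iff.2 fun g hg σ => ?_
  simpa [kerIndicator, Finset.sum_apply, kerPartition_realization, ← Subtype.ext_iff]
    using congrFun hg (realization σ)

theorem span_kerIndicator :
    Submodule.span ℝ (Set.range fun τ : RealizablePartition α S =>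
      (kerIndicator τ.1 : (α → S) → ℝ)) = kerInvariant := by
  apply le_antisymm
  · rw [Submodule.span_le]
    rintro _ ⟨τ, rfl⟩ χ χ' h
    simp only [kerIndicator, h]
  · intro v hv
    have hdecomp : v = ∑ τ, v (realization τ) • kerIndicator τ.1 := by
      funext χ
      let τχ : RealizablePartition α S := ⟨kerPartition χ, card_parts_kerPartition_le χ⟩
      rw [Finset.sum_apply, Fintype.sum_eq_single τχ fun τ hτ => ?_]
      · simpa [kerIndicator, τχ] using hv _ _ (kerPartition_realization τχ).symm
      · have hχτ : kerPartition χ ≠ τ := fun h => hτ (Subtype.ext h.symm)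
        simp [kerIndicator, hχτ]
    rw [hdecomp]
    exact Submodule.sum_mem _ fun τ _ => Submodule.smul_mem _ _ (Submodule.subset_span ⟨τ, rfl⟩)

end KerIndicator

section ConstantDistribution

variable {n : ℕ} {S : Type*} [Fintype S] [DecidableEq S] {π : S → ℝ} {c : ℝ}

open Classical in
theorem qpt_eq_smul_sum_kerIndicator (hπ : ∀ s, π s = c)
    (σ : Finpartition (univ : Finset (Fin n))) :
    qpt π σ = c ^ #σ.parts • ∑ τ with σ ≤ τ, kerIndicator τ := by
  funext χ
  simp only [sum_kerIndicator_filter, qpt, le_kerPartition_iff, Pi.smul_apply, hπ]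
  split_ifs <;> simp

theorem kerIndicator_mem_span_qpt (hπ : ∀ s, π s = c) (hc : c ≠ 0)
    (τ : Finpartition (univ : Finset (Fin n))) :
    kerIndicator τ ∈ Submodule.span ℝ
      {v | ∃ σ : Finpartition (univ : Finset (Fin n)),
        #σ.parts ≤ Fintype.card S ∧ v = qpt π σ} := by
  classical
  induction τ using WellFoundedGT.induction with
  | _ τ ih =>
    rcases le_or_gt #τ.parts (Fintype.card S) with hτ | hτ
    · have hsum : ∑ τ' with τ ≤ τ', kerIndicator τ' = (c ^ #τ.parts)⁻¹ • qpt π τ := by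
        rw [qpt_eq_smul_sum_kerIndicator hπ, inv_smul_smul₀ (pow_ne_zero _ hc)]
      rw [kerIndicator_eq_sub, hsum]
      exact sub_mem (Submodule.smul_mem _ _ (Submodule.subset_span ⟨τ, hτ, rfl⟩))
        (Submodule.sum_mem _ fun τ' hτ' => ih τ' (mem_filter.1 hτ').2)
    · rw [kerIndicator_eq_zero hτ]
      exact zero_mem _

theorem span_qpt_eq_kerInvariant (hπ : ∀ s, π s = c) (hc : c ≠ 0) :
    Submodule.span ℝ
      {v | ∃ σ : Finpartition (univ : Finset (Fin n)),
        #σ.parts ≤ Fintype.card S ∧ v = qpt π σ} = kerInvariant := by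
  classical
  apply le_antisymm
  · rw [Submodule.span_le]
    rintro _ ⟨σ, -, rfl⟩ χ χ' h
    simp only [qpt_eq_smul_sum_kerIndicator hπ, Pi.smul_apply, sum_kerIndicator_filter, h]
  · rw [← span_kerIndicator, Submodule.span_le]
    rintro _ ⟨τ, rfl⟩
    exact kerIndicator_mem_span_qpt hπ hc τ.1

end ConstantDistribution

theorem qpt_span_uniform_general (n : ℕ) {S : Type*} [Fintype S]
    [DecidableEq S] (κ : ℕ) (hκ : Fintype.card S = κ) (hκ1 : 1 ≤ κ)
    (π : S → ℝ) (hunif : ∀ s, π s = 1 / κ) :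
    (Submodule.span ℝ
        {v : (Fin n → S) → ℝ |
          ∃ σ : Finpartition (Finset.univ : Finset (Fin n)),
            σ.parts.card ≤ κ ∧ v = qpt π σ} : Set ((Fin n → S) → ℝ)) =
      {v : (Fin n → S) → ℝ | ∀ χ χ' : Fin n → S,
        (∀ i j, χ i = χ j ↔ χ' i = χ' j) → v χ = v χ'} ∧
    Module.finrank ℝ
        (Submodule.span ℝ
          {v : (Fin n → S) → ℝ |
            ∃ σ : Finpartition (Finset.univ : Finset (Fin n)),
              σ.parts.card ≤ κ ∧ v = qpt π σ}) =
      Nat.card {σ : Finpartition (Finset.univ : Finset (Fin n)) //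
        σ.parts.card ≤ κ} := by
  subst hκ
  have hspan := span_qpt_eq_kerInvariant (n := n) hunif (one_div_ne_zero (by positivity))
  refine ⟨?_, ?_⟩
  · rw [hspan]
    ext v
    exact forall₂_congr fun χ χ' => imp_congr_left kerPartition_eq_kerPartition_iff
  · rw [hspan, ← span_kerIndicator, finrank_span_eq_card linearIndependent_kerIndicator,
      Nat.card_eq_fintype_card]

/-- for the uniform distribution, the span of the points `q_σ`
(over partitions with at most `κ` blocks) is exactly the subspace of vectors
constant on classes of characters with a common kernel partition; in particular
its dimension is the number of set partitions of `Fin n` with at most `κ`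
blocks. -/
theorem qpt_span_uniform (n : ℕ) (hn : 1 ≤ n) {S : Type*} [Fintype S]
    [DecidableEq S] (κ : ℕ) (hκ : Fintype.card S = κ) (hκ1 : 1 ≤ κ)
    (π : S → ℝ) (hunif : ∀ s, π s = 1 / κ) :
    (Submodule.span ℝ
        {v : (Fin n → S) → ℝ |
          ∃ σ : Finpartition (Finset.univ : Finset (Fin n)),
            σ.parts.card ≤ κ ∧ v = qpt π σ} : Set ((Fin n → S) → ℝ)) =
      {v : (Fin n → S) → ℝ | ∀ χ χ' : Fin n → S,
        (∀ i j, χ i = χ j ↔ χ' i = χ' j) → v χ = v χ'} ∧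
    Module.finrank ℝ
        (Submodule.span ℝ
          {v : (Fin n → S) → ℝ |
            ∃ σ : Finpartition (Finset.univ : Finset (Fin n)),
              σ.parts.card ≤ κ ∧ v = qpt π σ}) =
      Nat.card {σ : Finpartition (Finset.univ : Finset (Fin n)) //
        σ.parts.card ≤ κ} :=
  qpt_span_uniform_general n κ hκ hκ1 π hunif
end

section
/- Let n ≥ 1, S a finite type, and π : S → ℝ with π(s) > 0 for all s and ∑ π = 1. Call two characters χ, χ' : Fin n → S equivalent (χ ≡ χ') if (i) they have the same kernel partition, i.e. for all i, j: χ i = χ j ↔ χ' i = χ' j, and (ii) χ'(i) = χ(i) for every i belonging to a block of the kernel partition of size at least 2 (i.e., whenever there exists j ≠ i with χ j = χ i). If χ ≡ χ', then for every set partition σ of Fin n, the normalized coordinates agree: q_σ(χ) / ∏_{i} π(χ(i)) = q_σ(χ') / ∏_{i} π(χ'(i)). -/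
/-!
When `χ` is constant on every block of `σ`, the normalized coordinate factors over the blocks
as `∏_B π(s_B) / π(s_B)^|B|`. A singleton block contributes `1` whatever its value, and on a
block of size at least `2` equivalent characters take the same value, so the factors agree.
When `χ` is not constant on some block, neither is `χ'` (same kernel partition), and both
coordinates vanish.
-/

open Finset

theorem Finpartition.prod_parts_prod {α M : Type*} [DecidableEq α] [CommMonoid M]
    {s : Finset α} (P : Finpartition s) (f : α → M) :
    ∏ B ∈ P.parts, ∏ i ∈ B, f i = ∏ i ∈ s, f i := by
  conv_rhs => rw [← P.biUnion_parts]
  exact (prod_biUnion P.supIndep.pairwiseDisjoint).symm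

theorem qpt_div_prod_eq_prod_parts {n : ℕ} {S : Type*} [Fintype S] [DecidableEq S]
    (π : S → ℝ) (σ : Finpartition (univ : Finset (Fin n))) {χ : Fin n → S}
    (hχ : ∀ B ∈ σ.parts, ∀ i ∈ B, ∀ j ∈ B, χ i = χ j) :
    qpt π σ χ / ∏ i, π (χ i) =
      ∏ B ∈ σ.parts.attach,
        π (χ ((B : Finset (Fin n)).min' (σ.nonempty_of_mem_parts B.2))) /
          π (χ ((B : Finset (Fin n)).min' (σ.nonempty_of_mem_parts B.2))) ^
            #(B : Finset (Fin n)) := by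
  rw [qpt, if_pos hχ, ← σ.prod_parts_prod, ← prod_attach σ.parts, ← prod_div_distrib]
  refine prod_congr rfl fun B _ => ?_
  have hmin := (B : Finset (Fin n)).min'_mem (σ.nonempty_of_mem_parts B.2)
  rw [prod_eq_pow_card fun i hi => congrArg π (hχ B B.2 i hi _ hmin)]

theorem div_pow_eq_div_pow_of_one_lt_imp_eq {K : Type*} [DivisionRing K] {a b : K}
    (ha : a ≠ 0) (hb : b ≠ 0) {k : ℕ} (hk : 0 < k) (hab : 1 < k → a = b) :
    a / a ^ k = b / b ^ k := by
  obtain rfl | hk1 := Nat.succ_le_of_lt hk |>.eq_or_lt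
  · rw [pow_one, pow_one, div_self ha, div_self hb]
  · rw [hab hk1]

theorem qpt_equiv_characters_general (n : ℕ) {S : Type*} [Fintype S]
    [DecidableEq S] (π : S → ℝ) (hpos : ∀ s, 0 < π s)
    (χ χ' : Fin n → S)
    (hker : ∀ i j, χ i = χ j ↔ χ' i = χ' j)
    (hagree : ∀ i, (∃ j, j ≠ i ∧ χ j = χ i) → χ' i = χ i) :
    ∀ σ : Finpartition (Finset.univ : Finset (Fin n)),
      qpt π σ χ / ∏ i, π (χ i) = qpt π σ χ' / ∏ i, π (χ' i) := by
  intro σ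
  by_cases hχ : ∀ B ∈ σ.parts, ∀ i ∈ B, ∀ j ∈ B, χ i = χ j
  · have hχ' : ∀ B ∈ σ.parts, ∀ i ∈ B, ∀ j ∈ B, χ' i = χ' j :=
      fun B hB i hi j hj => (hker i j).mp (hχ B hB i hi j hj)
    rw [qpt_div_prod_eq_prod_parts π σ hχ, qpt_div_prod_eq_prod_parts π σ hχ']
    refine prod_congr rfl fun B _ => ?_
    have hB := σ.nonempty_of_mem_parts B.2
    refine div_pow_eq_div_pow_of_one_lt_imp_eq (hpos _).ne' (hpos _).ne' hB.card_pos
      fun hcard => ?_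
    obtain ⟨j, hj, hjm⟩ := exists_mem_ne hcard (B.1.min' hB)
    exact congrArg π (hagree _ ⟨j, hjm, hχ B B.2 j hj _ (min'_mem _ hB)⟩).symm
  · have hχ' : ¬ ∀ B ∈ σ.parts, ∀ i ∈ B, ∀ j ∈ B, χ' i = χ' j :=
      fun h => hχ fun B hB i hi j hj => (hker i j).mpr (h B hB i hi j hj)
    rw [qpt, if_neg hχ, qpt, if_neg hχ', zero_div, zero_div]

/-- if two characters are equivalent (same kernel partition and
agreeing on every block of size at least 2), then all of their normalized
coordinates agree. -/
theorem qpt_equiv_characters (n : ℕ) (hn : 1 ≤ n) {S : Type*} [Fintype S]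
    [DecidableEq S] (π : S → ℝ) (hpos : ∀ s, 0 < π s) (hsum : ∑ s, π s = 1)
    (χ χ' : Fin n → S)
    (hker : ∀ i j, χ i = χ j ↔ χ' i = χ' j)
    (hagree : ∀ i, (∃ j, j ≠ i ∧ χ j = χ i) → χ' i = χ i) :
    ∀ σ : Finpartition (Finset.univ : Finset (Fin n)),
      qpt π σ χ / ∏ i, π (χ i) = qpt π σ χ' / ∏ i, π (χ' i) :=
  qpt_equiv_characters_general n π hpos χ χ' hker hagree
end

section
/- Let n ≥ 1, S a finite type, and π : S → ℝ with π(s) > 0 for all s, ∑ π = 1, and π injective (π(s) = π(t) implies s = t, i.e. π is not invariant under any nontrivial permutation of S). Let χ, χ' : Fin n → S be characters such that for every set partition σ of Fin n all of whose blocks are singletons except possibly one, q_σ(χ) / ∏_i π(χ(i)) = q_σ(χ') / ∏_i π(χ'(i)). Then χ ≡ χ': χ and χ' have the same kernel partition and χ'(i) = χ(i) for every i lying in a block of that kernel partition of size at least 2. -/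
open Finset

namespace Finpartition

variable {α : Type*} [DecidableEq α] {s B C : Finset α}

theorem prod_parts_prod_s14 {M : Type*} [CommMonoid M] (P : Finpartition s) (f : α → M) :
    ∏ B ∈ P.parts, ∏ i ∈ B, f i = ∏ i ∈ s, f i := by
  conv_rhs => rw [← P.biUnion_parts]
  exact (prod_biUnion P.disjoint).symm

def withBlock (hB : B.Nonempty) (hBs : B ⊆ s) : Finpartition s :=
  (⊥ : Finpartition (s \ B)).extend hB.ne_empty disjoint_sdiff_self_left
    (sdiff_union_of_subset hBs)

variable (hB : B.Nonempty) (hBs : B ⊆ s)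

theorem mem_withBlock_parts : B ∈ (withBlock hB hBs).parts :=
  mem_insert_self _ _

theorem card_eq_one_of_mem_withBlock_parts (hC : C ∈ (withBlock hB hBs).parts) (hCB : C ≠ B) :
    #C = 1 := by
  obtain ⟨a, -, rfl⟩ := mem_bot_iff.1 ((mem_insert.1 hC).resolve_left hCB)
  exact card_singleton a

theorem card_filter_withBlock_parts_le :
    #((withBlock hB hBs).parts.filter (fun C => 2 ≤ #C)) ≤ 1 := by
  have h : ∀ C ∈ (withBlock hB hBs).parts.filter (fun C => 2 ≤ #C), C = B := by
    intro C hC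
    rw [mem_filter] at hC
    by_contra hCB
    have := card_eq_one_of_mem_withBlock_parts hB hBs hC.1 hCB
    omega
  exact card_le_one.2 fun C hC D hD => (h C hC).trans (h D hD).symm

end Finpartition

section qpt

variable {n : ℕ} {S : Type*} [Fintype S] [DecidableEq S] {π : S → ℝ}
  {σ : Finpartition (univ : Finset (Fin n))} {χ : Fin n → S}

theorem qpt_div_prod (hpos : ∀ s, 0 < π s)
    (hχ : ∀ B ∈ σ.parts, ∀ i ∈ B, ∀ j ∈ B, χ i = χ j) :
    qpt π σ χ / ∏ i, π (χ i) =
      ∏ B ∈ σ.parts.attach, (π (χ (B.1.min' (σ.nonempty_of_mem_parts B.2))) ^ (#B.1 - 1))⁻¹ := by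
  have hprod : ∏ i, π (χ i) =
      ∏ B ∈ σ.parts.attach, π (χ (B.1.min' (σ.nonempty_of_mem_parts B.2))) ^ #B.1 := by
    rw [← σ.prod_parts_prod_s14, ← prod_attach]
    refine prod_congr rfl fun B _ => ?_
    rw [← prod_const]
    exact prod_congr rfl fun i hi => congrArg π (hχ B B.2 i hi _ (min'_mem _ _))
  rw [qpt, if_pos hχ, hprod, ← prod_div_distrib]
  refine prod_congr rfl fun B _ => ?_
  have hcard : #B.1 - 1 + 1 = #B.1 := Nat.sub_add_cancel (card_pos.2 (σ.nonempty_of_mem_parts B.2))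
  conv_lhs => rw [← hcard, pow_succ, div_mul_cancel_right₀ (hpos _).ne']

theorem qpt_div_prod_of_card_eq_one (hpos : ∀ s, 0 < π s) {B₀ : Finset (Fin n)}
    (hB₀ : B₀ ∈ σ.parts) (hone : ∀ B ∈ σ.parts, B ≠ B₀ → #B = 1) {b : Fin n} (hb : b ∈ B₀) :
    qpt π σ χ / ∏ i, π (χ i) =
      if ∀ i ∈ B₀, χ i = χ b then (π (χ b) ^ (#B₀ - 1))⁻¹ else 0 := by
  split_ifs with hconst
  · have hχ : ∀ B ∈ σ.parts, ∀ i ∈ B, ∀ j ∈ B, χ i = χ j := by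
      intro B hB i hi j hj
      by_cases hBB₀ : B = B₀
      · subst hBB₀
        rw [hconst i hi, hconst j hj]
      · rw [card_le_one.1 (hone B hB hBB₀).le i hi j hj]
    rw [qpt_div_prod hpos hχ, prod_eq_single_of_mem ⟨B₀, hB₀⟩ (mem_attach _ _)]
    · rw [hconst _ (min'_mem _ _)]
    · intro B _ hB
      rw [hone B.1 B.2 fun h => hB (Subtype.ext h), Nat.sub_self, pow_zero, inv_one]
  · rw [qpt, if_neg fun H => hconst fun i hi => H B₀ hB₀ i hi b hb, zero_div]

theorem qpt_withBlock_pair_div_prod (hpos : ∀ s, 0 < π s) {i j : Fin n} (hij : i ≠ j) :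
    qpt π (Finpartition.withBlock (insert_nonempty i {j}) (subset_univ _)) χ / ∏ k, π (χ k) =
      if χ j = χ i then (π (χ i))⁻¹ else 0 := by
  rw [qpt_div_prod_of_card_eq_one hpos (Finpartition.mem_withBlock_parts _ _)
    (fun _ => Finpartition.card_eq_one_of_mem_withBlock_parts _ _) (mem_insert_self i {j})]
  simp [card_pair hij]

end qpt

theorem qpt_equal_implies_equiv_general (n : ℕ) {S : Type*} [Fintype S]
    [DecidableEq S] (π : S → ℝ) (hpos : ∀ s, 0 < π s)
    (hinj : ∀ s t, π s = π t → s = t)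
    (χ χ' : Fin n → S)
    (h : ∀ σ : Finpartition (Finset.univ : Finset (Fin n)),
      ((σ.parts.filter (fun B => 2 ≤ B.card)).card ≤ 1) →
      qpt π σ χ / ∏ i, π (χ i) = qpt π σ χ' / ∏ i, π (χ' i)) :
    (∀ i j, χ i = χ j ↔ χ' i = χ' j) ∧
      ∀ i, (∃ j, j ≠ i ∧ χ j = χ i) → χ' i = χ i := by
  have pair : ∀ i j, i ≠ j → (χ j = χ i ↔ χ' j = χ' i) ∧ (χ j = χ i → χ' i = χ i) := by
    intro i j hij
    have hr := h _ (Finpartition.card_filter_withBlock_parts_le (insert_nonempty i {j})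
      (subset_univ _))
    rw [qpt_withBlock_pair_div_prod hpos hij, qpt_withBlock_pair_div_prod hpos hij] at hr
    split_ifs at hr with h₁ h₂ h₂
    · exact ⟨iff_of_true h₁ h₂, fun _ => hinj _ _ (inv_injective hr).symm⟩
    · exact absurd hr (inv_ne_zero (hpos _).ne')
    · exact absurd hr.symm (inv_ne_zero (hpos _).ne')
    · exact ⟨iff_of_false h₁ h₂, fun h => absurd h h₁⟩
  refine ⟨fun i j => ?_, fun i ⟨j, hji, hj⟩ => (pair i j hji.symm).2 hj⟩
  by_cases hij : i = j
  · simp [hij]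
  · exact (pair j i (Ne.symm hij)).1

/-- if `π` is injective and the normalized coordinates of `χ` and
`χ'` agree at every partition with at most one non-singleton block, then `χ` and
`χ'` are equivalent characters. -/
theorem qpt_equal_implies_equiv (n : ℕ) (hn : 1 ≤ n) {S : Type*} [Fintype S]
    [DecidableEq S] (π : S → ℝ) (hpos : ∀ s, 0 < π s) (hsum : ∑ s, π s = 1)
    (hinj : ∀ s t, π s = π t → s = t)
    (χ χ' : Fin n → S)
    (h : ∀ σ : Finpartition (Finset.univ : Finset (Fin n)),
      ((σ.parts.filter (fun B => 2 ≤ B.card)).card ≤ 1) →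
      qpt π σ χ / ∏ i, π (χ i) = qpt π σ χ' / ∏ i, π (χ' i)) :
    (∀ i j, χ i = χ j ↔ χ' i = χ' j) ∧
      ∀ i, (∃ j, j ≠ i ∧ χ j = χ i) → χ' i = χ i :=
  qpt_equal_implies_equiv_general n π hpos hinj χ χ' h
end

section
/- Let S be a finite type, π : S → ℝ with π(s) > 0 for all s and ∑ π = 1, and let x, y, z, w ∈ S be pairwise distinct. For a character χ : Fin 4 → S and a set partition σ of Fin 4, write q̃_σ(χ) = q_σ(χ) / (π(χ 0)·π(χ 1)·π(χ 2)·π(χ 3)). Then for every set partition σ of Fin 4 the following two identities hold (writing a character as the 4-tuple of its values): (I) π(y)·q̃_σ(x,x,y,y) + π(z)·q̃_σ(x,x,y,z) − π(y)·q̃_σ(x,x,z,y) − π(z)·q̃_σ(x,x,z,z) = 0; (II) π(x)·q̃_σ(x,x,y,z) + π(w)·q̃_σ(x,w,y,z) − π(w)·q̃_σ(w,w,y,z) − π(x)·q̃_σ(w,x,y,z) = 0. (These are linear model invariants for quartet trees under the equal input model, since the points q_σ over all partitions σ of Fin 4 span the space of phylogenetic mixtures when κ ≥ 4.) -/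
/-- The normalized coordinate `q̃_σ(χ) = q_σ(χ) / (π(χ 0) π(χ 1) π(χ 2) π(χ 3))`. -/
noncomputable def nqpt {S : Type*} [Fintype S] [DecidableEq S] (π : S → ℝ)
    (σ : Finpartition (Finset.univ : Finset (Fin 4))) (χ : Fin 4 → S) : ℝ :=
  qpt π σ χ / (π (χ 0) * π (χ 1) * π (χ 2) * π (χ 3))

/-! The coordinate `q̃_σ(χ)` vanishes unless `χ` is constant on every block of `σ`, and then equals
`∏_B π(s_B)^(1 - |B|)`. Both identities are instances of one relation between the four characters
that put `u` or `v` on two leaves `i ≠ j` while every other leaf carries a state different from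
`u` and `v`. If the block of `i` or of `j` contains a further leaf, all four coordinates vanish.
If `{i, j}` is a block, only the characters `uu` and `vv` survive, and `π(u) q̃(uu) = π(v) q̃(vv)`.
If `{i}` and `{j}` are blocks, the coordinate does not see leaves `i` and `j` at all, so the four
coordinates coincide. -/

open Finset

namespace Finpartition

variable {α : Type*} [Fintype α] [DecidableEq α] {P : Finpartition (univ : Finset α)}

theorem part_eq_singleton_of_forall_ne {i : α} (h : ∀ k ≠ i, P.part k ≠ P.part i) :
    P.part i = {i} := by
  ext k
  rw [P.mem_part_iff_part_eq_part (mem_univ k) (mem_univ i), mem_singleton]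
  exact ⟨fun hk => by_contra fun hki => h k hki hk, fun hk => hk ▸ rfl⟩

theorem part_eq_pair_of_forall_ne {i j : α} (hij : P.part i = P.part j)
    (h : ∀ k, k ≠ i → k ≠ j → P.part k ≠ P.part i) : P.part i = {i, j} := by
  ext k
  rw [P.mem_part_iff_part_eq_part (mem_univ k) (mem_univ i), mem_insert, mem_singleton]
  refine ⟨fun hk => ?_, ?_⟩
  · by_contra! hne
    exact h k hne.1 hne.2 hk
  · rintro (rfl | rfl)
    exacts [rfl, hij.symm]

end Finpartition

section

variable {n : ℕ} {S : Type*} [Fintype S] [DecidableEq S] {π : S → ℝ}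
  {σ : Finpartition (univ : Finset (Fin n))}

theorem qpt_eq_zero_of_ne {χ : Fin n → S} {k l : Fin n} (hkl : σ.part k = σ.part l)
    (hne : χ k ≠ χ l) : qpt π σ χ = 0 := by
  refine if_neg fun h => hne (h _ (σ.part_mem.2 (mem_univ l)) k ?_ l (σ.mem_part (mem_univ l)))
  exact hkl ▸ σ.mem_part (mem_univ k)

theorem qpt_mul_eq_of_eqOn_compl {B : Finset (Fin n)} (hB : B ∈ σ.parts) {χ χ' : Fin n → S}
    {c c' : S} (hc : ∀ k ∈ B, χ k = c) (hc' : ∀ k ∈ B, χ' k = c')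
    (hout : ∀ k ∉ B, χ' k = χ k) :
    qpt π σ χ * π c' = qpt π σ χ' * π c := by
  have hagree : ∀ B' ∈ σ.parts, B' ≠ B → ∀ k ∈ B', χ' k = χ k := fun B' hB' hne k hk =>
    hout k (disjoint_left.1 (σ.disjoint hB' hB hne) hk)
  have hcompat : (∀ B' ∈ σ.parts, ∀ k ∈ B', ∀ l ∈ B', χ' k = χ' l) ↔
      ∀ B' ∈ σ.parts, ∀ k ∈ B', ∀ l ∈ B', χ k = χ l := by
    refine forall₂_congr fun B' hB' => ?_
    by_cases hne : B' = B
    · subst hne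
      exact iff_of_true (fun k hk l hl => by rw [hc' k hk, hc' l hl])
        (fun k hk l hl => by rw [hc k hk, hc l hl])
    · refine forall₂_congr fun k hk => forall₂_congr fun l hl => ?_
      rw [hagree B' hB' hne k hk, hagree B' hB' hne l hl]
  unfold qpt
  by_cases h : ∀ B' ∈ σ.parts, ∀ k ∈ B', ∀ l ∈ B', χ k = χ l
  · rw [if_pos h, if_pos (hcompat.2 h), ← mul_prod_erase _ _ (mem_attach _ ⟨B, hB⟩),
      ← mul_prod_erase _ _ (mem_attach _ ⟨B, hB⟩), hc _ (min'_mem _ _), hc' _ (min'_mem _ _)]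
    have hrest : ∏ B' ∈ σ.parts.attach.erase ⟨B, hB⟩,
          π (χ' ((B' : Finset (Fin n)).min' (σ.nonempty_of_mem_parts B'.2))) =
        ∏ B' ∈ σ.parts.attach.erase ⟨B, hB⟩,
          π (χ ((B' : Finset (Fin n)).min' (σ.nonempty_of_mem_parts B'.2))) :=
      prod_congr rfl fun B' hB' => by
        rw [hagree B' B'.2 (fun h => (mem_erase.1 hB').1 (Subtype.ext h)) _ (min'_mem _ _)]
    rw [hrest]
    ring
  · rw [if_neg h, if_neg (mt hcompat.1 h), zero_mul, zero_mul]

noncomputable def normalizedQpt (π : S → ℝ) (σ : Finpartition (univ : Finset (Fin n)))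
    (χ : Fin n → S) : ℝ :=
  qpt π σ χ / ∏ k, π (χ k)

theorem nqpt_eq_normalizedQpt (π : S → ℝ) (σ : Finpartition (univ : Finset (Fin 4)))
    (χ : Fin 4 → S) : nqpt π σ χ = normalizedQpt π σ χ := by
  rw [nqpt, normalizedQpt, Fin.prod_univ_four]

theorem normalizedQpt_eq_zero_of_ne {χ : Fin n → S} {k l : Fin n} (hkl : σ.part k = σ.part l)
    (hne : χ k ≠ χ l) : normalizedQpt π σ χ = 0 := by
  rw [normalizedQpt, qpt_eq_zero_of_ne hkl hne, zero_div]

theorem pow_mul_normalizedQpt_eq_of_eqOn_compl (hπ : ∀ s, π s ≠ 0) {B : Finset (Fin n)}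
    (hB : B ∈ σ.parts) {χ χ' : Fin n → S} {c c' : S} (hc : ∀ k ∈ B, χ k = c)
    (hc' : ∀ k ∈ B, χ' k = c') (hout : ∀ k ∉ B, χ' k = χ k) :
    π c ^ (#B - 1) * normalizedQpt π σ χ = π c' ^ (#B - 1) * normalizedQpt π σ χ' := by
  obtain ⟨m, hm⟩ : ∃ m, #B = m + 1 :=
    Nat.exists_eq_succ_of_ne_zero (card_ne_zero.2 (σ.nonempty_of_mem_parts hB))
  have hrest : ∏ k ∈ Bᶜ, π (χ' k) = ∏ k ∈ Bᶜ, π (χ k) :=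
    prod_congr rfl fun k hk => by rw [hout k (mem_compl.1 hk)]
  have hR : ∏ k ∈ Bᶜ, π (χ k) ≠ 0 := prod_ne_zero_iff.2 fun k _ => hπ _
  have hq := qpt_mul_eq_of_eqOn_compl (π := π) hB hc hc' hout
  rw [normalizedQpt, normalizedQpt, ← prod_mul_prod_compl B, ← prod_mul_prod_compl B,
    prod_eq_pow_card fun k hk => congrArg π (hc k hk),
    prod_eq_pow_card fun k hk => congrArg π (hc' k hk), hrest, hm, Nat.add_sub_cancel]
  have := hπ c
  have := hπ c'
  field_simp
  linear_combination π c ^ m * π c' ^ m * hq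

theorem normalizedQpt_congr_of_part_eq_singleton (hπ : ∀ s, π s ≠ 0) {i : Fin n}
    (hi : σ.part i = {i}) {χ χ' : Fin n → S} (h : ∀ k ≠ i, χ' k = χ k) :
    normalizedQpt π σ χ = normalizedQpt π σ χ' := by
  have hB : {i} ∈ σ.parts := hi ▸ σ.part_mem.2 (mem_univ i)
  simpa using pow_mul_normalizedQpt_eq_of_eqOn_compl hπ hB (c := χ i) (c' := χ' i)
    (by simp) (by simp) fun k hk => h k (by simpa using hk)

theorem normalizedQpt_congr_of_parts_eq_singleton (hπ : ∀ s, π s ≠ 0) {i j : Fin n}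
    (hi : σ.part i = {i}) (hj : σ.part j = {j}) {χ χ' : Fin n → S}
    (h : ∀ k, k ≠ i → k ≠ j → χ' k = χ k) :
    normalizedQpt π σ χ = normalizedQpt π σ χ' := by
  rw [normalizedQpt_congr_of_part_eq_singleton hπ hi (χ' := fun k => if k = i then χ' k else χ k)
    fun k hki => if_neg hki]
  refine normalizedQpt_congr_of_part_eq_singleton hπ hj fun k hkj => ?_
  by_cases hki : k = i
  · rw [if_pos hki]
  · rw [if_neg hki, h k hki hkj]

theorem normalizedQpt_two_leaf_relation (hπ : ∀ s, π s ≠ 0) {i j : Fin n} (hij : i ≠ j)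
    {u v : S} (huv : u ≠ v) (χ : S → S → Fin n → S) (hi : ∀ a b, χ a b i = a)
    (hj : ∀ a b, χ a b j = b) (hrest : ∀ a b k, k ≠ i → k ≠ j → χ a b k = χ u u k)
    (havoid : ∀ k, k ≠ i → k ≠ j → χ u u k ≠ u ∧ χ u u k ≠ v) :
    π u * normalizedQpt π σ (χ u u) + π v * normalizedQpt π σ (χ u v)
      - π u * normalizedQpt π σ (χ v u) - π v * normalizedQpt π σ (χ v v) = 0 := by
  by_cases hext : ∃ k, k ≠ i ∧ k ≠ j ∧ (σ.part k = σ.part i ∨ σ.part k = σ.part j)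
  · obtain ⟨k, hki, hkj, hk⟩ := hext
    have hzero : ∀ a b, χ u u k ≠ a → χ u u k ≠ b → normalizedQpt π σ (χ a b) = 0 := by
      intro a b ha hb
      rcases hk with hk | hk
      · exact normalizedQpt_eq_zero_of_ne hk (by rwa [hrest a b k hki hkj, hi])
      · exact normalizedQpt_eq_zero_of_ne hk (by rwa [hrest a b k hki hkj, hj])
    obtain ⟨hu, hv⟩ := havoid k hki hkj
    rw [hzero u u hu hu, hzero u v hu hv, hzero v u hv hu, hzero v v hv hv]
    ring
  push Not at hext
  by_cases hsame : σ.part i = σ.part j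
  · have hB : {i, j} ∈ σ.parts :=
      σ.part_eq_pair_of_forall_ne hsame (fun k hki hkj => (hext k hki hkj).1) ▸
        σ.part_mem.2 (mem_univ i)
    have hmid := pow_mul_normalizedQpt_eq_of_eqOn_compl hπ hB (χ := χ u u) (χ' := χ v v)
      (c := u) (c' := v) (by simp [hi, hj]) (by simp [hi, hj]) fun k hk => by
        simp only [mem_insert, mem_singleton, not_or] at hk
        exact hrest v v k hk.1 hk.2
    rw [card_pair hij, pow_one, pow_one] at hmid
    rw [normalizedQpt_eq_zero_of_ne (χ := χ u v) hsame (by rw [hi, hj]; exact huv),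
      normalizedQpt_eq_zero_of_ne (χ := χ v u) hsame (by rw [hi, hj]; exact huv.symm)]
    linear_combination hmid
  · have hpart_i : σ.part i = {i} := σ.part_eq_singleton_of_forall_ne fun k hki hk => by
      by_cases hkj : k = j
      · exact hsame (hkj ▸ hk).symm
      · exact (hext k hki hkj).1 hk
    have hpart_j : σ.part j = {j} := σ.part_eq_singleton_of_forall_ne fun k hkj hk => by
      by_cases hki : k = i
      · exact hsame (hki ▸ hk)
      · exact (hext k hki hkj).2 hk
    have hconst : ∀ a b, normalizedQpt π σ (χ a b) = normalizedQpt π σ (χ u u) := fun a b =>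
      normalizedQpt_congr_of_parts_eq_singleton hπ hpart_i hpart_j fun k hki hkj =>
        (hrest a b k hki hkj).symm
    rw [hconst u v, hconst v u, hconst v v]
    ring

end

theorem ei_model_invariants_n4_general {S : Type*} [Fintype S] [DecidableEq S]
    (π : S → ℝ) (hpos : ∀ s, 0 < π s)
    (x y z w : S)
    (hd : x ≠ y ∧ x ≠ z ∧ x ≠ w ∧ y ≠ z ∧ y ≠ w ∧ z ≠ w)
    (σ : Finpartition (Finset.univ : Finset (Fin 4))) :
    (π y * nqpt π σ ![x, x, y, y] + π z * nqpt π σ ![x, x, y, z]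
      - π y * nqpt π σ ![x, x, z, y] - π z * nqpt π σ ![x, x, z, z] = 0) ∧
    (π x * nqpt π σ ![x, x, y, z] + π w * nqpt π σ ![x, w, y, z]
      - π w * nqpt π σ ![w, w, y, z] - π x * nqpt π σ ![w, x, y, z] = 0) := by
  obtain ⟨hxy, hxz, hxw, hyz, hyw, hzw⟩ := hd
  have hπ : ∀ s, π s ≠ 0 := fun s => (hpos s).ne'
  simp only [nqpt_eq_normalizedQpt]
  constructor
  · exact normalizedQpt_two_leaf_relation hπ (i := 2) (j := 3) (by decide) hyz
      (fun a b => ![x, x, a, b]) (fun _ _ => rfl) (fun _ _ => rfl)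
      (by intro a b k; fin_cases k <;> simp) (by intro k; fin_cases k <;> simp [hxy, hxz])
  · have h := normalizedQpt_two_leaf_relation (σ := σ) hπ (i := 0) (j := 1) (by decide) hxw
      (fun a b => ![a, b, y, z]) (fun _ _ => rfl) (fun _ _ => rfl)
      (by intro a b k; fin_cases k <;> simp)
      (by intro k; fin_cases k <;> simp [hxy.symm, hxz.symm, hyw, hzw])
    linear_combination h

/-- two families of linear model invariants for quartet trees under
the equal input model, expressed by their vanishing at every point `q_σ`. -/
theorem ei_model_invariants_n4 {S : Type*} [Fintype S] [DecidableEq S]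
    (π : S → ℝ) (hpos : ∀ s, 0 < π s) (hsum : ∑ s, π s = 1)
    (x y z w : S)
    (hd : x ≠ y ∧ x ≠ z ∧ x ≠ w ∧ y ≠ z ∧ y ≠ w ∧ z ≠ w)
    (σ : Finpartition (Finset.univ : Finset (Fin 4))) :
    (π y * nqpt π σ ![x, x, y, y] + π z * nqpt π σ ![x, x, y, z]
      - π y * nqpt π σ ![x, x, z, y] - π z * nqpt π σ ![x, x, z, z] = 0) ∧
    (π x * nqpt π σ ![x, x, y, z] + π w * nqpt π σ ![x, w, y, z]
      - π w * nqpt π σ ![w, w, y, z] - π x * nqpt π σ ![w, x, y, z] = 0) :=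
  ei_model_invariants_n4_general π hpos x y z w hd σ
end
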